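/- Suppose κ = κ^{<κ} is uncountable, F ⊆ κ^κ has size κ⁺, and for each n < ω, E^n ⊆ κ is a club and h_n is a partial function from κ^{<κ} to κ^{<κ}, where H_f^n(α) := f↾β_n(α) with β_n(α) := min(⋂_{k<n} E^k \ (α+1)). If for every f ∈ F and every n < ω there is α_n^f such that h_n(f↾α) = H_f^n(α) for all α ∈ E^n with α ≥ α_n^f, then there exist distinct f, g ∈ F and an ordinal β with f↾β = g↾β and β strictly greater than max{α ∈ ⋂_n E^n : f↾α = g↾α}, which is impossible. Hence the club uniformization statement 'for every F-coloring H̄ there exist a club E ⊆ κ and h : κ^{<κ} → κ^{<κ} with (∀f ∈ F)(∃α_f < κ)(∀α ∈ E \ α_f)(h(f↾α) = H_f(α))' fails. -/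

import Mathlib

open Ordinal Set Cardinal

noncomputable section

/-- A "sequence" coded as (length, values padded by 0 off the domain). -/
abbrev OSeq : Type 1 := Ordinal × (Ordinal → Ordinal)

/-- The restriction `f↾α` of `f` to ordinals below `α`. -/
def restr (f : Ordinal → Ordinal) (α : Ordinal) : OSeq :=
  (α, fun β => if β < α then f β else 0)

/-- `E` is a club (closed unbounded) subset of (the ordinals below) `o`. -/
def IsClubOrd (o : Ordinal) (E : Set Ordinal) : Prop :=
  E ⊆ Set.Iio o ∧ (∀ S ⊆ E, S.Nonempty → sSup S < o → sSup S ∈ E) ∧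
    ∀ α < o, ∃ β ∈ E, α ≤ β

/-- `s` is a sequence of length `< κ` with values `< κ`. -/
def IsSeq (κ : Cardinal) (s : OSeq) : Prop :=
  s.1 < κ.ord ∧ (∀ β < s.1, s.2 β < κ.ord) ∧ ∀ β, ¬ β < s.1 → s.2 β = 0

/-!
Let `E = ⋂ₙ Eⁿ`. If `f↾α = g↾α` at a point `α ∈ E` beyond all the thresholds `αₙᶠ, αₙᵍ`, then
`hₙ` carries this to `f↾βₙ(α) = g↾βₙ(α)` for every `n`, and `supₙ βₙ(α)` lies in `E` again;
closedness of `E` then pushes the agreement all the way up to `κ`. On the other hand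
`|F| = κ⁺` and `κ^{<κ} = κ` yield distinct `f, g` with a common threshold below some `α ∈ E`
with `f↾α = g↾α`. For the second part, the clubs `Eⁿ` and maps `hₙ` are obtained by
uniformizing the colorings `Hⁿ` one after another.
-/

lemma restr_eq_restr_iff {f g : Ordinal → Ordinal} {α : Ordinal} :
    restr f α = restr g α ↔ EqOn f g (Iio α) := by
  refine ⟨fun h β hβ => ?_, fun h => Prod.ext rfl (funext fun β => ?_)⟩
  · simpa [restr, mem_Iio.1 hβ] using congrFun (congrArg Prod.snd h) β
  · by_cases hβ : β < α
    · simp [restr, hβ, h hβ]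
    · simp [restr, hβ]

lemma isSeq_restr {κ : Cardinal} {f : Ordinal → Ordinal} {α : Ordinal}
    (hf : ∀ β < α, f β < κ.ord) (hα : α < κ.ord) : IsSeq κ (restr f α) :=
  ⟨hα, fun β hβ => (if_pos hβ).trans_lt (hf β hβ), fun _ hβ => if_neg hβ⟩

/-- `min (D \ (α + 1))`, the paper's `βₙ(α)` for `D = ⋂_{k<n} Eᵏ`; it is `0` if `D` has no
point above `α`. -/
def nextPoint (D : Set Ordinal) (α : Ordinal) : Ordinal :=
  sInf {β | α < β ∧ β ∈ D}

def finInter (E : ℕ → Set Ordinal) (n : ℕ) : Set Ordinal :=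
  {β | ∀ k < n, β ∈ E k}

section Clubs

variable {o α β : Ordinal.{0}} {D E : Set Ordinal.{0}}

lemma nextPoint_spec (h : ∃ β ∈ D, α < β) : α < nextPoint D α ∧ nextPoint D α ∈ D :=
  csInf_mem (s := {β | α < β ∧ β ∈ D}) (by obtain ⟨β, hβ, hαβ⟩ := h; exact ⟨β, hαβ, hβ⟩)

lemma nextPoint_le (hβ : β ∈ D) (hαβ : α < β) : nextPoint D α ≤ β :=
  csInf_le' ⟨hαβ, hβ⟩

lemma nextPoint_anti {D' : Set Ordinal} (hDD' : D ⊆ D') (h : ∃ β ∈ D, α < β) :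
    nextPoint D' α ≤ nextPoint D α :=
  nextPoint_le (hDD' (nextPoint_spec h).2) (nextPoint_spec h).1

lemma finInter_anti (E : ℕ → Set Ordinal) : Antitone (finInter E) :=
  fun _ _ hmn _ hβ k hk => hβ k (hk.trans_le hmn)

lemma finInter_succ (E : ℕ → Set Ordinal) (n : ℕ) :
    finInter E (n + 1) = finInter E n ∩ E n := by
  ext β
  simp [finInter, Nat.le_iff_lt_or_eq, or_imp, forall_and]

lemma iInter_subset_finInter (E : ℕ → Set Ordinal) (n : ℕ) : ⋂ k, E k ⊆ finInter E n :=
  fun _ hβ k _ => mem_iInter.1 hβ k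

lemma isClubOrd_Iio (o : Ordinal) : IsClubOrd o (Iio o) :=
  ⟨subset_rfl, fun _ _ _ hlt => hlt, fun α hα => ⟨α, hα, le_rfl⟩⟩

lemma IsClubOrd.exists_gt (hE : IsClubOrd o E) (ho : Order.IsSuccLimit o) (hα : α < o) :
    ∃ β ∈ E, α < β := by
  obtain ⟨β, hβ, hαβ⟩ := hE.2.2 (Order.succ α) (ho.succ_lt hα)
  exact ⟨β, hβ, Order.succ_le_iff.1 hαβ⟩

lemma IsClubOrd.nextPoint_lt (hE : IsClubOrd o E) (ho : Order.IsSuccLimit o) (hED : E ⊆ D)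
    (hα : α < o) : nextPoint D α < o := by
  obtain ⟨β, hβ, hαβ⟩ := hE.exists_gt ho hα
  exact (nextPoint_le (hED hβ) hαβ).trans_lt (hE.1 hβ)

lemma IsClubOrd.iSup_mem {ι : Type} [Nonempty ι] {s : ι → Ordinal} (hE : IsClubOrd o E)
    (hs : ∀ i, s i ∈ E) (hlt : ⨆ i, s i < o) : ⨆ i, s i ∈ E :=
  hE.2.1 _ (range_subset_iff.2 hs) (range_nonempty _) hlt

end Clubs

section Regular

variable {κ : Cardinal.{0}} {α : Ordinal.{0}}

lemma iSup_lt_ord_of_countable (hreg : κ.IsRegular) (hunc : ℵ₀ < κ) {ι : Type} [Countable ι]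
    {s : ι → Ordinal} (hs : ∀ i, s i < κ.ord) : ⨆ i, s i < κ.ord :=
  iSup_lt_of_lt_cof (by rw [hreg.cof_ord]; exact mk_le_aleph0.trans_lt hunc) hs

lemma exists_lt_ord_forall_nat (hreg : κ.IsRegular) (hunc : ℵ₀ < κ)
    {P : ℕ → Ordinal → Prop} (h : ∀ n, ∃ a < κ.ord, ∀ α, a ≤ α → P n α) :
    ∃ a < κ.ord, ∀ n α, a ≤ α → P n α := by
  choose a ha hP using h
  exact ⟨⨆ n, a n, iSup_lt_ord_of_countable hreg hunc ha,
    fun n α hα => hP n α ((Ordinal.le_iSup a n).trans hα)⟩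

/-- Closing `γ` under the maps `nextPoint (E i)` ω times lands in every `E i`. -/
lemma isClubOrd_iInter (hreg : κ.IsRegular) (hunc : ℵ₀ < κ) {ι : Type} [Countable ι]
    [Nonempty ι] {E : ι → Set Ordinal} (hE : ∀ i, IsClubOrd κ.ord (E i)) :
    IsClubOrd κ.ord (⋂ i, E i) := by
  have ho := isSuccLimit_ord hreg.aleph0_le
  refine ⟨(iInter_subset _ (Classical.arbitrary ι)).trans (hE _).1,
    fun S hS hne hlt => mem_iInter.2 fun i => (hE i).2.1 S (hS.trans (iInter_subset _ i)) hne hlt,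
    fun γ hγ => ?_⟩
  let d : ℕ → Ordinal := fun m => Nat.rec γ (fun _ δ => ⨆ i, nextPoint (E i) δ) m
  have hd : ∀ m, d m < κ.ord := by
    intro m
    induction m with
    | zero => exact hγ
    | succ m ih =>
      exact iSup_lt_ord_of_countable hreg hunc fun i => (hE i).nextPoint_lt ho subset_rfl ih
  have hnext i m : d m < nextPoint (E i) (d m) ∧ nextPoint (E i) (d m) ∈ E i :=
    nextPoint_spec ((hE i).exists_gt ho (hd m))
  have hsup i : ⨆ m, nextPoint (E i) (d m) = ⨆ m, d m :=
    le_antisymm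
      (Ordinal.iSup_le fun m => (Ordinal.le_iSup (fun i => nextPoint (E i) (d m)) i).trans
        (Ordinal.le_iSup d (m + 1)))
      (Ordinal.iSup_le fun m => (hnext i m).1.le.trans (Ordinal.le_iSup _ m))
  refine ⟨⨆ m, d m, mem_iInter.2 fun i => ?_, Ordinal.le_iSup d 0⟩
  rw [← hsup i]
  exact (hE i).iSup_mem (fun m => (hnext i m).2)
    (by rw [hsup i]; exact iSup_lt_ord_of_countable hreg hunc hd)

lemma IsClubOrd.inter (hreg : κ.IsRegular) (hunc : ℵ₀ < κ) {A B : Set Ordinal}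
    (hA : IsClubOrd κ.ord A) (hB : IsClubOrd κ.ord B) : IsClubOrd κ.ord (A ∩ B) := by
  rw [inter_eq_iInter]
  exact isClubOrd_iInter hreg hunc fun b => by cases b <;> assumption

lemma isClubOrd_Iio_inter_finInter (hreg : κ.IsRegular) (hunc : ℵ₀ < κ)
    {E : ℕ → Set Ordinal} {n : ℕ} (hE : ∀ k < n, IsClubOrd κ.ord (E k)) :
    IsClubOrd κ.ord (Iio κ.ord ∩ finInter E n) := by
  induction n with
  | zero => simpa [finInter] using isClubOrd_Iio κ.ord
  | succ n ih =>
    rw [finInter_succ, ← inter_assoc]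
    exact (ih fun k hk => hE k (hk.trans n.lt_succ_self)).inter hreg hunc (hE n n.lt_succ_self)

lemma iSup_nextPoint_finInter_mem (hreg : κ.IsRegular) (hunc : ℵ₀ < κ)
    {E : ℕ → Set Ordinal} (hE : ∀ n, IsClubOrd κ.ord (E n)) (hα : α ∈ ⋂ n, E n) :
    α < ⨆ n, nextPoint (finInter E n) α ∧ ⨆ n, nextPoint (finInter E n) α ∈ ⋂ n, E n := by
  have ho := isSuccLimit_ord hreg.aleph0_le
  have hI := isClubOrd_iInter hreg hunc hE
  have hex n : ∃ β ∈ finInter E n, α < β := by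
    obtain ⟨β, hβ, hαβ⟩ := hI.exists_gt ho (hI.1 hα)
    exact ⟨β, iInter_subset_finInter E n hβ, hαβ⟩
  set b : ℕ → Ordinal := fun n => nextPoint (finInter E n) α
  have hmono : Monotone b := fun m n hmn => nextPoint_anti (finInter_anti E hmn) (hex n)
  have hlt : ⨆ n, b n < κ.ord := iSup_lt_ord_of_countable hreg hunc fun n =>
    hI.nextPoint_lt ho (iInter_subset_finInter E n) (hI.1 hα)
  refine ⟨(nextPoint_spec (hex 0)).1.trans_le (Ordinal.le_iSup b 0), mem_iInter.2 fun k => ?_⟩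
  -- every tail of `b` has the same supremum, and the tail beyond `k` lies in `E k`
  have htail : ⨆ n, b (n + (k + 1)) = ⨆ n, b n :=
    hmono.ciSup_comp_tendsto_atTop (Ordinal.bddAbove_of_small) (Filter.tendsto_add_atTop_nat _)
  rw [← htail]
  exact (hE k).iSup_mem (fun n => (nextPoint_spec (hex _)).2 k (by omega)) (htail ▸ hlt)

lemma exists_ne_eqOn_Iio (hpow : κ ^< κ = κ) {ι : Type 1} (u : ι → Ordinal.{0} → Ordinal.{0})
    (hι : lift.{1} κ < #ι) (hu : ∀ i, ∀ β < κ.ord, u i β < κ.ord) (hα : α < κ.ord) :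
    ∃ i j, i ≠ j ∧ EqOn (u i) (u j) (Iio α) := by
  by_contra! H
  let φ : ι → (Iio α → Iio κ.ord) := fun i β => ⟨u i β, hu i β (β.2.trans hα)⟩
  have hφ : Function.Injective φ := fun i j hij => by_contra fun hne =>
    H i j hne fun β hβ => congrArg Subtype.val (congrFun hij ⟨β, hβ⟩)
  have : #ι ≤ lift.{1} κ :=
    calc #ι ≤ #(Iio α → Iio κ.ord) := mk_le_of_injective hφ
      _ = lift.{1} (κ ^ α.card) := by
        rw [← power_def, Cardinal.mk_Iio_ordinal, Cardinal.mk_Iio_ordinal, card_ord,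
          Cardinal.lift_power]
      _ ≤ lift.{1} κ := Cardinal.lift_le.2 ((le_powerlt κ (lt_ord.1 hα)).trans hpow.le)
  exact hι.not_ge this

/-- By pigeonhole `κ⁺` many members of `F` share a bound `< κ`; above it, `κ^{<κ} = κ` forces
two of them to agree up to a point of the club. -/
lemma exists_ne_eqOn_Iio_of_isClubOrd (hreg : κ.IsRegular) (hpow : κ ^< κ = κ)
    {F : Set (Ordinal → Ordinal)} (hF : #F = lift.{1} (Order.succ κ))
    (hFrange : ∀ f ∈ F, ∀ β < κ.ord, f β < κ.ord) (a : F → Ordinal) (ha : ∀ f, a f < κ.ord)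
    {E : Set Ordinal} (hE : IsClubOrd κ.ord E) :
    ∃ f g : F, f ≠ g ∧ ∃ α ∈ E, a f ≤ α ∧ a g ≤ α ∧ EqOn f.1 g.1 (Iio α) := by
  have hκ : ℵ₀ ≤ lift.{1} κ := aleph0_le_lift.2 hreg.aleph0_le
  rw [Cardinal.lift_succ] at hF
  let m : F → Iio κ.ord := fun f => ⟨a f, ha f⟩
  obtain ⟨b, hb⟩ := infinite_pigeonhole_card m _ hF.ge (hκ.trans (Order.le_succ _))
    (by rw [Cardinal.mk_Iio_ordinal, card_ord, (isRegular_succ hκ).cof_ord]; exact Order.lt_succ _)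
  obtain ⟨α, hαE, hbα⟩ := hE.2.2 b b.2
  obtain ⟨i, j, hij, hEq⟩ := exists_ne_eqOn_Iio hpow (fun x : m ⁻¹' {b} => x.1.1)
    ((Order.lt_succ _).trans_le hb) (fun x => hFrange _ x.1.2) (hE.1 hαE)
  have hbound (x : m ⁻¹' {b}) : a x.1 ≤ α := (congrArg Subtype.val x.2).trans_le hbα
  exact ⟨i, j, Subtype.coe_injective.ne hij, α, hαE, hbound i, hbound j, hEq⟩

end Regular

lemma IsClubOrd.eqOn_Iio_of_forall_exists_gt {X : Type*} {o α : Ordinal} {E : Set Ordinal}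
    (hE : IsClubOrd o E) {f g : Ordinal → X} (hα : α ∈ E) (hfg : EqOn f g (Iio α))
    (hstep : ∀ x ∈ E, α ≤ x → EqOn f g (Iio x) → ∃ y ∈ E, x < y ∧ EqOn f g (Iio y)) :
    EqOn f g (Iio o) := by
  intro β hβ
  by_contra hne
  let T := {x | x ∈ E ∧ α ≤ x ∧ EqOn f g (Iio x)}
  have hTne : T.Nonempty := ⟨α, hα, le_rfl, hfg⟩
  have hTβ : ∀ x ∈ T, x ≤ β := fun x hx => not_lt.1 fun hβx => hne (hx.2.2 hβx)
  have hTsup : sSup T ≤ β := csSup_le hTne hTβ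
  have hTbdd : BddAbove T := ⟨β, hTβ⟩
  have hsupE : sSup T ∈ E := hE.2.1 T (fun x hx => hx.1) hTne (hTsup.trans_lt hβ)
  have hsupEq : EqOn f g (Iio (sSup T)) := fun γ hγ => by
    obtain ⟨x, hxT, hγx⟩ := exists_lt_of_lt_csSup hTne hγ
    exact hxT.2.2 hγx
  have hαsup : α ≤ sSup T := le_csSup hTbdd ⟨hα, le_rfl, hfg⟩
  obtain ⟨y, hyE, hy, hyEq⟩ := hstep _ hsupE hαsup hsupEq
  exact hy.not_ge (le_csSup hTbdd ⟨hyE, hαsup.trans hy.le, hyEq⟩)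

section Uniformization

variable {κ : Cardinal.{0}}

/-- Agreement of `f` and `g` up to `α` is transported by each `h n` to agreement up to the next
point of `⋂_{k<n} E k`; the supremum of these points is again in `⋂ E`. -/
lemma exists_gt_eqOn_of_uniformizes (hreg : κ.IsRegular) (hunc : ℵ₀ < κ)
    {E : ℕ → Set Ordinal} (hE : ∀ n, IsClubOrd κ.ord (E n)) {h : ℕ → OSeq → Option OSeq}
    {f g : Ordinal → Ordinal} {α : Ordinal}
    (hf : ∀ n, h n (restr f α) = some (restr f (nextPoint (finInter E n) α)))
    (hg : ∀ n, h n (restr g α) = some (restr g (nextPoint (finInter E n) α)))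
    (hα : α ∈ ⋂ n, E n) (hfg : EqOn f g (Iio α)) :
    ∃ β ∈ ⋂ n, E n, α < β ∧ EqOn f g (Iio β) := by
  obtain ⟨hlt, hmem⟩ := iSup_nextPoint_finInter_mem hreg hunc hE hα
  refine ⟨_, hmem, hlt, fun β hβ => ?_⟩
  obtain ⟨n, hn⟩ := Ordinal.lt_iSup_iff.1 hβ
  have hfgn := hf n
  rw [restr_eq_restr_iff.2 hfg, hg n] at hfgn
  exact (restr_eq_restr_iff.1 (Option.some_injective _ hfgn)).symm hn

theorem false_of_uniformizes_nextPoint_colorings (hreg : κ.IsRegular) (hunc : ℵ₀ < κ)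
    (hpow : κ ^< κ = κ) {F : Set (Ordinal → Ordinal)} (hF : #F = lift.{1} (Order.succ κ))
    (hFrange : ∀ f ∈ F, ∀ β < κ.ord, f β < κ.ord)
    (hFsep : ∀ f ∈ F, ∀ g ∈ F, f ≠ g → ∃ β < κ.ord, f β ≠ g β)
    {E : ℕ → Set Ordinal} (hE : ∀ n, IsClubOrd κ.ord (E n)) {h : ℕ → OSeq → Option OSeq}
    (hyp : ∀ f ∈ F, ∀ n, ∃ a < κ.ord, ∀ α ∈ E n, a ≤ α →
      h n (restr f α) = some (restr f (nextPoint (finInter E n) α))) :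
    False := by
  have hbound (f : F) : ∃ a < κ.ord, ∀ n α, a ≤ α → α ∈ E n →
      h n (restr f α) = some (restr f (nextPoint (finInter E n) α)) :=
    exists_lt_ord_forall_nat hreg hunc fun n =>
      let ⟨a, ha, H⟩ := hyp f f.2 n
      ⟨a, ha, fun α hα hαE => H α hαE hα⟩
  choose a ha hah using hbound
  have hI := isClubOrd_iInter hreg hunc hE
  obtain ⟨f, g, hfg, α, hαI, hfα, hgα, hEq⟩ :=
    exists_ne_eqOn_Iio_of_isClubOrd hreg hpow hF hFrange a ha hI
  have hall : EqOn f.1 g.1 (Iio κ.ord) :=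
    hI.eqOn_Iio_of_forall_exists_gt hαI hEq fun x hx hαx hxEq =>
      exists_gt_eqOn_of_uniformizes hreg hunc hE
        (fun n => hah f n x (hfα.trans hαx) (mem_iInter.1 hx n))
        (fun n => hah g n x (hgα.trans hαx) (mem_iInter.1 hx n)) hx hxEq
  obtain ⟨β, hβ, hne⟩ := hFsep f f.2 g g.2 (Subtype.coe_injective.ne hfg)
  exact hne (hall hβ)

def clubSeq (pick : Set Ordinal → Set Ordinal) (n : ℕ) : Set Ordinal :=
  pick {β | ∀ k (_ : k < n), β ∈ clubSeq pick k}
termination_by n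

lemma clubSeq_eq (pick : Set Ordinal → Set Ordinal) (n : ℕ) :
    clubSeq pick n = pick (finInter (clubSeq pick) n) := by
  rw [clubSeq]
  rfl

/-- Uniformizing the coloring `f ↦ f↾nextPoint D α` for `D = ⋂_{k<n} E k` yields `E n`. -/
theorem exists_clubs_uniformizing_nextPoint_colorings (hreg : κ.IsRegular) (hunc : ℵ₀ < κ)
    {F : Set (Ordinal → Ordinal)} (hFrange : ∀ f ∈ F, ∀ β < κ.ord, f β < κ.ord)
    (huni : ∀ H : (Ordinal → Ordinal) → Ordinal → OSeq,
      (∀ f ∈ F, ∀ α < κ.ord, IsSeq κ (H f α)) →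
      ∃ E : Set Ordinal, IsClubOrd κ.ord E ∧
        ∃ h : OSeq → OSeq, ∀ f ∈ F, ∃ a < κ.ord, ∀ α ∈ E, a ≤ α → h (restr f α) = H f α) :
    ∃ E : ℕ → Set Ordinal, (∀ n, IsClubOrd κ.ord (E n)) ∧
      ∃ h : ℕ → OSeq → Option OSeq, ∀ f ∈ F, ∀ n, ∃ a < κ.ord, ∀ α ∈ E n, a ≤ α →
        h n (restr f α) = some (restr f (nextPoint (finInter E n) α)) := by
  have ho := isSuccLimit_ord hreg.aleph0_le
  have hpick (D : Set Ordinal) : ∃ p : Set Ordinal × (OSeq → OSeq),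
      (∀ α < κ.ord, nextPoint D α < κ.ord) → IsClubOrd κ.ord p.1 ∧
        ∀ f ∈ F, ∃ a < κ.ord, ∀ α ∈ p.1, a ≤ α → p.2 (restr f α) = restr f (nextPoint D α) := by
    by_cases hD : ∀ α < κ.ord, nextPoint D α < κ.ord
    · obtain ⟨E, hE, h, hh⟩ := huni (fun f α => restr f (nextPoint D α))
        fun f hf α hα => isSeq_restr (fun β hβ => hFrange f hf β (hβ.trans (hD α hα))) (hD α hα)
      exact ⟨(E, h), fun _ => ⟨hE, hh⟩⟩
    · exact ⟨(∅, id), fun h => absurd h hD⟩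
  choose pick hpick using hpick
  set E := clubSeq fun D => (pick D).1
  have hEeq n : E n = (pick (finInter E n)).1 := clubSeq_eq _ n
  have hvalid n (hE : ∀ k < n, IsClubOrd κ.ord (E k)) :
      ∀ α < κ.ord, nextPoint (finInter E n) α < κ.ord := fun α hα =>
    (isClubOrd_Iio_inter_finInter hreg hunc hE).nextPoint_lt ho inter_subset_right hα
  have hclub n : IsClubOrd κ.ord (E n) := by
    induction n using Nat.strong_induction_on with
    | _ n ih => rw [hEeq]; exact (hpick _ (hvalid n ih)).1
  refine ⟨E, hclub, fun n s => some ((pick (finInter E n)).2 s), fun f hf n => ?_⟩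
  obtain ⟨a, ha, H⟩ := (hpick _ (hvalid n fun k _ => hclub k)).2 f hf
  exact ⟨a, ha, fun α hα hαa => congrArg some (H α (hEeq n ▸ hα) hαa)⟩

end Uniformization

/-- (1) A system of clubs Eⁿ and partial functions hₙ uniformizing the derived
colorings Hⁿ_f(α) = f↾min(⋂_{k<n} Eᵏ \ (α+1)) is impossible when |F| = κ⁺;
hence (2) the club uniformization statement for F-colorings fails. -/
theorem stmt13 (κ : Cardinal) (hreg : κ.IsRegular) (hunc : ℵ₀ < κ)
    (hpow : κ ^< κ = κ)
    (F : Set (Ordinal → Ordinal))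
    (hF : #F = Cardinal.lift.{1,0} (Order.succ κ))
    (hFrange : ∀ f ∈ F, ∀ β < κ.ord, f β < κ.ord)
    (hFsep : ∀ f ∈ F, ∀ g ∈ F, f ≠ g → ∃ β < κ.ord, f β ≠ g β) :
    (∀ E' : ℕ → Set Ordinal, (∀ n, IsClubOrd κ.ord (E' n)) →
      ∀ h : ℕ → OSeq → Option OSeq,
      (∀ f ∈ F, ∀ n : ℕ, ∃ a < κ.ord, ∀ α ∈ E' n, a ≤ α →
        h n (restr f α) = some (restr f (sInf {β | α < β ∧ ∀ k < n, β ∈ E' k}))) →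
      False) ∧
    ¬ (∀ H : (Ordinal → Ordinal) → Ordinal → OSeq,
        (∀ f ∈ F, ∀ α < κ.ord, IsSeq κ (H f α)) →
        ∃ E : Set Ordinal, IsClubOrd κ.ord E ∧
          ∃ h : OSeq → OSeq, ∀ f ∈ F, ∃ a < κ.ord, ∀ α ∈ E, a ≤ α →
            h (restr f α) = H f α) := by
  refine ⟨fun _ hE _ hyp =>
    false_of_uniformizes_nextPoint_colorings hreg hunc hpow hF hFrange hFsep hE hyp, fun huni => ?_⟩
  obtain ⟨_, hE, _, hyp⟩ := exists_clubs_uniformizing_nextPoint_colorings hreg hunc hFrange huni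
  exact false_of_uniformizes_nextPoint_colorings hreg hunc hpow hF hFrange hFsep hE hyp
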